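/- Let b : ℕ → ℂ satisfy b_{k+3} = k(k+1)·bₖ for all k ≥ 0 with b₁ = λ ≠ 0. Then for l ≥ 1, |b_{3l+1}| = |λ|·∏_{j=1}^{l}(3j−1)(3j−2) ≥ |λ|·∏_{j=1}^{l} j² = |λ|·(l!)², and hence the power series Σ_l b_{3l+1} z^{3l+1} has radius of convergence 0. -/

import Mathlib

lemma aux_eq (lam : ℂ) (b : ℕ → ℂ) (hb1 : b 1 = lam)
    (hrec : ∀ k : ℕ, b (k + 3) = (k : ℂ) * (k + 1) * b k) :
    ∀ l : ℕ, ‖b (3 * l + 1)‖ =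
      ‖lam‖ * ∏ j ∈ Finset.Icc 1 l, ((3 * (j : ℝ) - 1) * (3 * (j : ℝ) - 2)) := by
  intro l
  induction l with
  | zero => simp [hb1]
  | succ n ih =>
      have h : b (3 * (n + 1) + 1) = ((3 * n + 1 : ℕ) : ℂ) * ((3 * n + 1 : ℕ) + 1) * b (3 * n + 1) := by
        have e : 3 * (n + 1) + 1 = 3 * n + 1 + 3 := by ring
        rw [e, hrec (3 * n + 1)]
      rw [h, norm_mul, norm_mul, ih, Finset.prod_Icc_succ_top (Nat.succ_le_succ (Nat.zero_le n))]
      have h1 : ‖((3 * n + 1 : ℕ) : ℂ)‖ = ((3 * n + 1 : ℕ) : ℝ) := Complex.norm_natCast _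
      have h2 : ‖((3 * n + 1 : ℕ) : ℂ) + 1‖ = ((3 * n + 2 : ℕ) : ℝ) := by
        rw [show (((3 * n + 1 : ℕ) : ℂ) + 1) = ((3 * n + 2 : ℕ) : ℂ) by push_cast; ring]
        exact Complex.norm_natCast _
      rw [h1, h2]
      push_cast
      ring

lemma aux_ge (l : ℕ) :
    ((l.factorial : ℝ)) ^ 2 ≤ ∏ j ∈ Finset.Icc 1 l, ((3 * (j : ℝ) - 1) * (3 * (j : ℝ) - 2)) := by
  have hfact : ((l.factorial : ℝ)) ^ 2 = ∏ j ∈ Finset.Icc 1 l, ((j : ℝ)) ^ 2 := by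
    have hp : ∏ j ∈ Finset.Icc 1 l, (j : ℝ) = (l.factorial : ℝ) := by
      rw [← Nat.cast_prod, show Finset.Icc 1 l = Finset.Ico 1 (l + 1) by
        rw [Finset.Ico_add_one_right_eq_Icc], Finset.prod_Ico_id_eq_factorial]
    rw [Finset.prod_pow, hp]
  rw [hfact]
  apply Finset.prod_le_prod
  · intro j _; positivity
  · intro j hj
    have h1 : (1 : ℕ) ≤ j := (Finset.mem_Icc.mp hj).1
    have h1' : (1 : ℝ) ≤ (j : ℝ) := by exact_mod_cast h1
    nlinarith

/-- Growth of the separatrix coefficients: with `b_{k+3} = k(k+1)·bₖ` and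
`b₁ = λ ≠ 0`, one has `|b_{3l+1}| = |λ|·∏_{j=1}^{l}(3j−1)(3j−2) ≥ |λ|·(l!)²`
for `l ≥ 1`, and the power series `Σ_l b_{3l+1} z^{3l+1}` has radius of
convergence `0` (it diverges at every `z ≠ 0`). -/
theorem stmt_19 (lam : ℂ) (hlam : lam ≠ 0) (b : ℕ → ℂ)
    (hb1 : b 1 = lam)
    (hrec : ∀ k : ℕ, b (k + 3) = (k : ℂ) * (k + 1) * b k) :
    (∀ l : ℕ, 1 ≤ l →
      ‖b (3 * l + 1)‖ =
          ‖lam‖ *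
            ∏ j ∈ Finset.Icc 1 l, ((3 * (j : ℝ) - 1) * (3 * (j : ℝ) - 2)) ∧
        ‖lam‖ * ((l.factorial : ℝ)) ^ 2 ≤ ‖b (3 * l + 1)‖) ∧
      ∀ z : ℂ, z ≠ 0 → ¬ Summable fun l : ℕ => b (3 * l + 1) * z ^ (3 * l + 1) := by
  have hA := aux_eq lam b hb1 hrec
  have hlam' : 0 < ‖lam‖ := by
    simpa [norm_pos_iff] using hlam
  have hlow : ∀ l : ℕ, ‖lam‖ * ((l.factorial : ℝ)) ^ 2 ≤ ‖b (3 * l + 1)‖ := by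
    intro l
    rw [hA l]
    exact mul_le_mul_of_nonneg_left (aux_ge l) (norm_nonneg _)
  constructor
  · exact fun l _ => ⟨hA l, hlow l⟩
  · intro z hz hs
    set r : ℝ := ‖z‖ with hr
    have hr0 : 0 < r := by simpa [hr, norm_pos_iff] using hz
    -- lower bound for the terms
    set g : ℕ → ℝ := fun l => ‖lam‖ * ((l.factorial : ℝ)) ^ 2 * r ^ (3 * l + 1) with hg
    have hfg : ∀ l : ℕ, g l ≤ ‖b (3 * l + 1) * z ^ (3 * l + 1)‖ := by
      intro l
      rw [norm_mul, norm_pow]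
      exact mul_le_mul_of_nonneg_right (hlow l) (by positivity)
    obtain ⟨N, hN⟩ := exists_nat_ge (1 / r ^ 3)
    have hgn0 : ∀ n : ℕ, 0 ≤ g n := by
      intro n; simp only [hg]; positivity
    have hmono : ∀ l, N ≤ l → g N ≤ g l := by
      intro l hl
      induction l, hl using Nat.le_induction with
      | base => exact le_refl _
      | succ n hn ih =>
          refine le_trans ih ?_
          have h1 : (1 : ℝ) ≤ (n + 1 : ℝ) ^ 2 * r ^ 3 := by
            have hNn : (N : ℝ) ≤ (n + 1 : ℝ) ^ 2 := by
              have : (N : ℝ) ≤ (n : ℝ) + 1 := by exact_mod_cast Nat.le_succ_of_le hn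
              nlinarith [Nat.cast_nonneg (α := ℝ) n]
            have h2 : 1 / r ^ 3 ≤ (n + 1 : ℝ) ^ 2 := le_trans hN hNn
            calc (1 : ℝ) = (1 / r ^ 3) * r ^ 3 := by field_simp
              _ ≤ (n + 1 : ℝ) ^ 2 * r ^ 3 :=
                  mul_le_mul_of_nonneg_right h2 (by positivity)
          have hge : g (n + 1) = g n * ((n + 1 : ℝ) ^ 2 * r ^ 3) := by
            simp only [hg, Nat.factorial_succ]
            push_cast
            ring
          rw [hge]
          exact le_mul_of_one_le_right (hgn0 n) h1
    have hgN0 : 0 < g N := by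
      simp only [hg]
      have : (0 : ℝ) < ((N.factorial : ℝ)) ^ 2 := by positivity
      positivity
    have htend : Filter.Tendsto (fun l : ℕ => ‖b (3 * l + 1) * z ^ (3 * l + 1)‖)
        Filter.atTop (nhds 0) := by
      simpa using hs.tendsto_atTop_zero.norm
    have hev : ∀ᶠ l in Filter.atTop,
        ‖b (3 * l + 1) * z ^ (3 * l + 1)‖ < g N := by
      have := htend.eventually (gt_mem_nhds hgN0)
      simpa using this
    obtain ⟨l, hlN, hl⟩ := (hev.and (Filter.eventually_ge_atTop N)).exists
    exact absurd (le_trans (hmono l hl) (hfg l)) (not_le.mpr hlN)
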